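/- arXiv:2502.19727 — 10 statements merged into one kernel-verified Lean document; each statement's English description precedes it below -/
import Mathlib

section
/- For every uncountable subset B of ω^ω (with the pointwise partial order: α ≤ β iff α(n) ≤ β(n) for all n), there exists α ∈ ω^ω such that the set {β ∈ B : β ≤ α} is infinite. -/
open Set

/-- For every uncountable `B ⊆ ω^ω` (pointwise order) there is `α ∈ ω^ω` such that
`{β ∈ B : β ≤ α}` is infinite. -/
theorem uncountable_subset_omega_omega_has_infinite_bounded_subset
    (B : Set (ℕ → ℕ)) (hB : ¬ B.Countable) :
    ∃ α : ℕ → ℕ, {β ∈ B | β ≤ α}.Infinite := by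
  classical
  -- Step 1: there is a "condensation point" `b ∈ B`.
  have h1 : ∃ b ∈ B, ∀ n : ℕ, ¬ ({γ ∈ B | ∀ i < n, γ i = b i}).Countable := by
    by_contra h
    push_neg at h
    apply hB
    have hsub : B ⊆ ⋃ (p : {p : (Σ n : ℕ, Fin n → ℕ) //
        ({γ ∈ B | ∀ i : Fin p.1, γ i = p.2 i}).Countable}),
        {γ ∈ B | ∀ i : Fin p.1.1, γ i = p.1.2 i} := by
      intro β hβ
      obtain ⟨n, hn⟩ := h β hβ
      have hEq : {γ ∈ B | ∀ i : Fin n, γ i = β i} = {γ ∈ B | ∀ i < n, γ i = β i} := by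
        ext γ
        simp only [Set.mem_setOf_eq]
        constructor
        · rintro ⟨h1, h2⟩; exact ⟨h1, fun i hi => h2 ⟨i, hi⟩⟩
        · rintro ⟨h1, h2⟩; exact ⟨h1, fun i => h2 i i.2⟩
      refine Set.mem_iUnion.2 ⟨⟨⟨n, fun i => β i⟩, ?_⟩, ?_⟩
      · simpa [hEq] using hn
      · exact ⟨hβ, fun i => rfl⟩
    exact (Set.countable_iUnion fun p => p.2).mono hsub
  obtain ⟨b, hbB, hb⟩ := h1
  set A : ℕ → Set (ℕ → ℕ) := fun n => {γ ∈ B | ∀ i < n, γ i = b i} with hA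
  have hAinf : ∀ n, (A n).Infinite := by
    intro n
    by_contra h
    exact hb n ((Set.not_infinite.mp h).countable)
  -- choose witnesses
  have hf : ∀ n, ∃ γ, (γ ∈ A n ∧ γ ≠ b) := by
    intro n
    obtain ⟨γ, hγ⟩ := ((hAinf n).diff (Set.finite_singleton b)).nonempty
    exact ⟨γ, hγ.1, by simpa using hγ.2⟩
  choose f hf1 hf2 using hf
  -- the bound
  set α : ℕ → ℕ := fun n => max (b n) ((Finset.range (n + 1)).sup fun i => f i n) with hα
  have hle : ∀ i, f i ≤ α := by
    intro i n
    show f i n ≤ max (b n) ((Finset.range (n + 1)).sup fun j => f j n)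
    by_cases h : i ≤ n
    · have h1 : f i n ≤ (Finset.range (n + 1)).sup fun j => f j n :=
        Finset.le_sup (f := fun j => f j n) (Finset.mem_range.mpr (Nat.lt_succ_of_le h))
      exact le_trans h1 (le_max_right _ _)
    · have : f i n = b n := (hf1 i).2 n (lt_of_not_ge h)
      rw [this]; exact le_max_left _ _
  -- the range of f is infinite
  have hrange : (Set.range f).Infinite := by
    by_contra h
    rw [Set.not_infinite] at h
    have : Finite (Set.range f) := h
    obtain ⟨y, hy⟩ := Finite.exists_infinite_fiber (Set.rangeFactorization f)
    have hfib : {n | f n = (y : ℕ → ℕ)}.Infinite := by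
      rw [← Set.infinite_coe_iff]
      have hEq : Set.rangeFactorization f ⁻¹' {y} = {n | f n = (y : ℕ → ℕ)} := by
        ext n
        simp [Set.rangeFactorization, Subtype.ext_iff]
      rwa [← hEq]
    have hyne : (y : ℕ → ℕ) ≠ b := by
      obtain ⟨n₀, hn₀⟩ := y.2
      intro hc
      obtain ⟨m, hm⟩ := hfib.nonempty
      exact hf2 m (hm.trans hc)
    apply hyne
    funext i
    obtain ⟨n, hn, hni⟩ := hfib.exists_gt i
    rw [← hn]
    exact (hf1 n).2 i hni
  refine ⟨α, hrange.mono ?_⟩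
  rintro _ ⟨i, rfl⟩
  exact ⟨(hf1 i).1, hle i⟩
end

section
/- For a topological space X, the hyperspace F(X) of nonempty finite subsets of X, endowed with the Vietoris topology, has an ω^ω-base if and only if X has an ω^ω-base. -/
open Set Filter Topology

/-- `CL X`: the nonempty closed subsets of `X`. -/
abbrev CL (X : Type*) [TopologicalSpace X] := {A : Set X // A.Nonempty ∧ IsClosed A}

/-- An `ω^ω`-base of neighborhoods at a point `y` of a space with topology `t`:
a neighborhood base `{U_α : α ∈ ω^ω}` with `U_β ⊆ U_α` whenever `α ≤ β` pointwise. -/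
def HasOmegaOmegaBaseAt {Y : Type*} (t : TopologicalSpace Y) (y : Y) : Prop :=
  ∃ U : (ℕ → ℕ) → Set Y, (∀ α, U α ∈ @nhds Y t y) ∧
    (∀ α β : ℕ → ℕ, α ≤ β → U β ⊆ U α) ∧
    ∀ V ∈ @nhds Y t y, ∃ α, U α ⊆ V

/-- The Vietoris topology on `CL X`, generated by the sets `U⁺` and `U⁻` for `U` open. -/
def vietoris (X : Type*) [TopologicalSpace X] : TopologicalSpace (CL X) :=
  TopologicalSpace.generateFrom
    ({S | ∃ U : Set X, IsOpen U ∧ S = {A : CL X | (A : Set X) ⊆ U}} ∪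
     {S | ∃ U : Set X, IsOpen U ∧ S = {A : CL X | ((A : Set X) ∩ U).Nonempty}})

/-- The Fell topology on `CL X`, generated by the sets `U⁻` for `U` open and
`(Kᶜ)⁺` for `K` compact. -/
def fell (X : Type*) [TopologicalSpace X] : TopologicalSpace (CL X) :=
  TopologicalSpace.generateFrom
    ({S | ∃ U : Set X, IsOpen U ∧ S = {A : CL X | ((A : Set X) ∩ U).Nonempty}} ∪
     {S | ∃ K : Set X, IsCompact K ∧ S = {A : CL X | (A : Set X) ⊆ Kᶜ}})

/-- `FH X`: the nonempty finite subsets of `X`. -/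
abbrev FH (X : Type*) := {A : Set X // A.Finite ∧ A.Nonempty}

/-- The Vietoris topology on the hyperspace of nonempty finite subsets. -/
def vietorisF (X : Type*) [TopologicalSpace X] : TopologicalSpace (FH X) :=
  TopologicalSpace.generateFrom
    ({S | ∃ U : Set X, IsOpen U ∧ S = {A : FH X | (A : Set X) ⊆ U}} ∪
     {S | ∃ U : Set X, IsOpen U ∧ S = {A : FH X | ((A : Set X) ∩ U).Nonempty}})

/-- `(F(X), τ_V)` has an `ω^ω`-base iff `X` has an `ω^ω`-base. -/
theorem finiteHyperspace_vietoris_omegaOmegaBase_iff {X : Type*} [tX : TopologicalSpace X] :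
    (∀ A : FH X, HasOmegaOmegaBaseAt (vietorisF X) A) ↔
      (∀ x : X, HasOmegaOmegaBaseAt tX x) := by
  letI tV := vietorisF X
  set g : Set (Set (FH X)) :=
    ({S | ∃ U : Set X, IsOpen U ∧ S = {A : FH X | (A : Set X) ⊆ U}} ∪
     {S | ∃ U : Set X, IsOpen U ∧ S = {A : FH X | ((A : Set X) ∩ U).Nonempty}}) with hg
  have htV : tV = TopologicalSpace.generateFrom g := rfl
  constructor
  · intro h x
    set σ : X → FH X := fun y => ⟨{y}, Set.finite_singleton y, Set.singleton_nonempty y⟩ with hσ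
    have hpre : ∀ S : Set (FH X), TopologicalSpace.GenerateOpen g S → IsOpen (σ ⁻¹' S) := by
      intro S hS
      induction hS with
      | basic s hs =>
        rcases hs with ⟨V, hV, rfl⟩ | ⟨V, hV, rfl⟩
        · convert hV using 1
          ext y
          simp [σ]
        · convert hV using 1
          ext y
          simp [σ]
      | univ => exact isOpen_univ
      | inter s t _ _ ihs iht => exact ihs.inter iht
      | sUnion S _ ih =>
        rw [Set.preimage_sUnion]
        exact isOpen_biUnion ih
    obtain ⟨U, hU1, hU2, hU3⟩ := h (σ x)
    refine ⟨fun α => σ ⁻¹' U α, ?_, fun α β hab y hy => hU2 α β hab hy, ?_⟩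
    · intro α
      obtain ⟨O, hOU, hOopen, hAO⟩ := mem_nhds_iff.mp (hU1 α)
      exact mem_nhds_iff.mpr ⟨σ ⁻¹' O, fun y hy => hOU hy, hpre O hOopen, hAO⟩
    · intro V hV
      obtain ⟨V', hV'V, hV'open, hxV'⟩ := mem_nhds_iff.mp hV
      have hSopen : IsOpen[tV] {A : FH X | (A : Set X) ⊆ V'} :=
        TopologicalSpace.GenerateOpen.basic _ (Or.inl ⟨V', hV'open, rfl⟩)
      have hSmem : {A : FH X | (A : Set X) ⊆ V'} ∈ @nhds _ tV (σ x) :=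
        hSopen.mem_nhds (by simpa [σ] using hxV')
      obtain ⟨α, hα⟩ := hU3 _ hSmem
      exact ⟨α, fun y hy => hV'V (by simpa [σ] using hα hy)⟩
  · intro h A
    choose U hU1 hU2 hU3 using h
    have hO : ∀ (x : X) (α : ℕ → ℕ), ∃ O : Set X, O ⊆ U x α ∧ IsOpen O ∧ x ∈ O :=
      fun x α => mem_nhds_iff.mp (hU1 x α)
    choose O hO1 hO2 hO3 using hO
    set W : (ℕ → ℕ) → Set (FH X) := fun α =>
      {B : FH X | (B : Set X) ⊆ (⋃ x ∈ (A : Set X), U x α) ∧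
        ∀ x ∈ (A : Set X), ((B : Set X) ∩ U x α).Nonempty} with hWdef
    have hmono : ∀ α β : ℕ → ℕ, α ≤ β → W β ⊆ W α := by
      intro α β hab B hB
      refine ⟨hB.1.trans (Set.iUnion₂_mono fun x _ => hU2 x α β hab), fun x hx => ?_⟩
      exact (hB.2 x hx).mono (Set.inter_subset_inter_right _ (hU2 x α β hab))
    refine ⟨W, ?_, hmono, ?_⟩
    · intro α
      set G : Set (FH X) := {B : FH X | (B : Set X) ⊆ ⋃ x ∈ (A : Set X), O x α} ∩
        ⋂ x ∈ (A : Set X), {B : FH X | ((B : Set X) ∩ O x α).Nonempty} with hGdef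
      have hGopen : IsOpen[tV] G := by
        refine IsOpen.inter ?_ ?_
        · exact TopologicalSpace.GenerateOpen.basic _
            (Or.inl ⟨_, isOpen_biUnion fun x _ => hO2 x α, rfl⟩)
        · exact Set.Finite.isOpen_biInter A.2.1 fun x _ =>
            TopologicalSpace.GenerateOpen.basic _ (Or.inr ⟨O x α, hO2 x α, rfl⟩)
      have hAG : A ∈ G := by
        refine ⟨fun y hy => Set.mem_biUnion hy (hO3 y α), ?_⟩
        exact Set.mem_biInter fun x hx => ⟨x, hx, hO3 x α⟩
      have hGW : G ⊆ W α := by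
        rintro B ⟨hB1, hB2⟩
        refine ⟨hB1.trans (Set.iUnion₂_mono fun x _ => hO1 x α), fun x hx => ?_⟩
        exact (Set.mem_iInter₂.mp hB2 x hx).mono
          (Set.inter_subset_inter_right _ (hO1 x α))
      exact mem_nhds_iff.mpr ⟨G, hGW, hGopen, hAG⟩
    · intro N hN
      obtain ⟨Os, hON, hOopen, hAO⟩ := mem_nhds_iff.mp hN
      have hGOs : TopologicalSpace.GenerateOpen g Os := hOopen
      suffices hsuff : ∀ S : Set (FH X), TopologicalSpace.GenerateOpen g S →
          A ∈ S → ∃ α, W α ⊆ S by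
        obtain ⟨α, hα⟩ := hsuff Os hGOs hAO
        exact ⟨α, hα.trans hON⟩
      intro S hS
      induction hS with
      | basic s hs =>
        intro hAs
        rcases hs with ⟨V, hV, rfl⟩ | ⟨V, hV, rfl⟩
        · have hch : ∀ x : X, ∃ α, x ∈ (A : Set X) → U x α ⊆ V := by
            intro x
            by_cases hx : x ∈ (A : Set X)
            · obtain ⟨α, hα⟩ := hU3 x V (hV.mem_nhds (hAs hx))
              exact ⟨α, fun _ => hα⟩
            · exact ⟨0, fun hx' => absurd hx' hx⟩
          choose αf hαf using hch
          refine ⟨A.2.1.toFinset.sup αf, fun B hB y hy => ?_⟩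
          obtain ⟨x, hx, hyx⟩ := Set.mem_iUnion₂.mp (hB.1 hy)
          have hle : αf x ≤ A.2.1.toFinset.sup αf :=
            Finset.le_sup (A.2.1.mem_toFinset.mpr hx)
          exact hαf x hx (hU2 x _ _ hle hyx)
        · obtain ⟨x, hx, hxV⟩ := hAs
          obtain ⟨α, hα⟩ := hU3 x V (hV.mem_nhds hxV)
          exact ⟨α, fun B hB => (hB.2 x hx).mono (Set.inter_subset_inter_right _ hα)⟩
      | univ => exact fun _ => ⟨0, fun B _ => trivial⟩
      | inter s t _ _ ihs iht =>
        intro hAst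
        obtain ⟨α, hα⟩ := ihs hAst.1
        obtain ⟨β, hβ⟩ := iht hAst.2
        exact ⟨α ⊔ β, fun B hB =>
          ⟨hα (hmono _ _ le_sup_left hB), hβ (hmono _ _ le_sup_right hB)⟩⟩
      | sUnion S _ ih =>
        rintro ⟨s, hs, hAs⟩
        obtain ⟨α, hα⟩ := ih s hs hAs
        exact ⟨α, hα.trans (Set.subset_sUnion_of_mem hs)⟩
end

section
/- Let D be a discrete topological space of cardinality ω₁. Then the hyperspace F(D) of nonempty finite subsets of D with the Fell topology does not have an ω^ω-base; in fact, for any point x ∈ D, the singleton {x} has no ω^ω-base of neighborhoods in (F(D), τ_F). -/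
/-!
If `{x}` had an `ω^ω`-base `(U_α)`, then for each of the uncountably many `y ≠ x` some `U_{α_y}`
would lie in the neighbourhood `({y}ᶜ)⁺`, which misses the pair `{x, y}`. An uncountable family
in `ω^ω` has an infinite pointwise bounded subfamily (take an injective sequence converging to a
condensation point), so a single `U_β` misses infinitely many pairs `{x, y}`. But the pairs
`{x, y}` converge to `{x}` as `y` leaves every compact, i.e. finite, set.
-/

open Set Filter Topology

/-- The Fell topology on the hyperspace of nonempty finite subsets: subbase
`U⁻` for `U` open and `(Kᶜ)⁺` for `K` compact, `K ≠ X`. -/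
def fellF (X : Type*) [TopologicalSpace X] : TopologicalSpace (FH X) :=
  TopologicalSpace.generateFrom
    ({S | ∃ U : Set X, IsOpen U ∧ S = {A : FH X | ((A : Set X) ∩ U).Nonempty}} ∪
     {S | ∃ K : Set X, IsCompact K ∧ K ≠ Set.univ ∧ S = {A : FH X | (A : Set X) ⊆ Kᶜ}})

section Combinatorics

variable {X Y : Type*}

theorem exists_forall_nhds_not_countable_inter_preimage [TopologicalSpace X]
    [SecondCountableTopology X] (g : Y → X) {S : Set Y} (hS : ¬ S.Countable) :
    ∃ z, ∀ U ∈ 𝓝 z, ¬ (S ∩ g ⁻¹' U).Countable := by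
  by_contra! h
  choose U hU hcount using h
  obtain ⟨t, htc, hcover⟩ := TopologicalSpace.countable_cover_nhds hU
  refine hS ((htc.biUnion fun z _ => hcount z).mono fun y hy => ?_)
  obtain ⟨z, hz, hyz⟩ := mem_iUnion₂.1 (hcover ▸ mem_univ (g y))
  exact mem_iUnion₂.2 ⟨z, hz, hy, hyz⟩

theorem exists_injective_forall_mem_of_antitone {A : ℕ → Set Y} (hA : Antitone A)
    (hinf : ∀ n, (A n).Infinite) : ∃ w : ℕ → Y, Function.Injective w ∧ ∀ n, w n ∈ A n := by
  classical
  obtain ⟨f, hfA, hf⟩ := exists_seq_of_forall_finset_exists (fun p : ℕ × Y => p.2 ∈ A p.1)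
    (fun p q => p.1 < q.1 ∧ p.2 ≠ q.2) fun s _ => by
      obtain ⟨y, hy, hys⟩ :=
        (hinf (s.sup Prod.fst + 1)).exists_notMem_finset (s.image Prod.snd)
      refine ⟨(s.sup Prod.fst + 1, y), hy, fun p hp => ⟨Nat.lt_succ_of_le (Finset.le_sup hp), ?_⟩⟩
      rintro rfl
      exact hys (Finset.mem_image_of_mem _ hp)
  have hmono : StrictMono fun n => (f n).1 := fun m n hmn => (hf m n hmn).1
  refine ⟨fun n => (f n).2, fun m n hmn => ?_, fun n => hA (hmono.id_le n) (hfA n)⟩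
  by_contra hne
  rcases lt_or_gt_of_ne hne with h | h
  · exact (hf m n h).2 hmn
  · exact (hf n m h).2 hmn.symm

theorem Filter.Tendsto.bddAbove_range_pi {ι α : Type*} [Preorder α] [TopologicalSpace α]
    [BoundedLENhdsClass α] [IsDirectedOrder α] {u : ℕ → ι → α} {z : ι → α}
    (h : Tendsto u atTop (𝓝 z)) : BddAbove (range u) :=
  bddAbove_pi.2 fun i => by
    rw [← range_comp]
    exact (((continuous_apply i).tendsto z).comp h).bddAbove_range

theorem exists_infinite_subset_bddAbove_image (g : Y → ℕ → ℕ) {S : Set Y}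
    (hS : ¬ S.Countable) : ∃ T ⊆ S, T.Infinite ∧ BddAbove (g '' T) := by
  obtain ⟨z, hz⟩ := exists_forall_nhds_not_countable_inter_preimage g hS
  obtain ⟨V, hV⟩ := (𝓝 z).exists_antitone_basis
  obtain ⟨w, hw_inj, hw⟩ := exists_injective_forall_mem_of_antitone
    (A := fun n => S ∩ g ⁻¹' V n)
    (fun m n hmn => inter_subset_inter_right _ (preimage_mono (hV.antitone hmn)))
    fun n hfin => hz _ (hV.mem n) hfin.countable
  refine ⟨range w, range_subset_iff.2 fun n => (hw n).1, infinite_range_of_injective hw_inj, ?_⟩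
  rw [← range_comp]
  exact (hV.tendsto fun n => (hw n).2).bddAbove_range_pi

end Combinatorics

theorem HasOmegaOmegaBaseAt.exists_infinite_biInter_mem_nhds {Y ι : Type*}
    {t : TopologicalSpace Y} {p : Y} (h : HasOmegaOmegaBaseAt t p) {W : ι → Set Y} {S : Set ι}
    (hS : ¬ S.Countable) (hW : ∀ i ∈ S, W i ∈ @nhds Y t p) :
    ∃ T ⊆ S, T.Infinite ∧ ⋂ i ∈ T, W i ∈ @nhds Y t p := by
  obtain ⟨U, hU, hmono, hbase⟩ := h
  have : ∀ i, ∃ α, i ∈ S → U α ⊆ W i := fun i => by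
    by_cases hi : i ∈ S
    · obtain ⟨α, hα⟩ := hbase _ (hW i hi)
      exact ⟨α, fun _ => hα⟩
    · exact ⟨0, fun h => absurd h hi⟩
  choose α hα using this
  obtain ⟨T, hTS, hT, β, hβ⟩ := exists_infinite_subset_bddAbove_image α hS
  refine ⟨T, hTS, hT, mem_of_superset (hU β) (subset_iInter₂ fun i hi => ?_)⟩
  exact (hmono _ _ (hβ (mem_image_of_mem α hi))).trans (hα i (hTS hi))

section Fell

variable {X : Type*} [TopologicalSpace X]

def FH.pair (x y : X) : FH X :=
  ⟨{x, y}, (finite_singleton y).insert x, insert_nonempty x {y}⟩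

theorem tendsto_pair_cocompact_nhds_fellF (x : X) :
    Tendsto (FH.pair x) (cocompact X)
      (@nhds _ (fellF X) ⟨{x}, finite_singleton x, singleton_nonempty x⟩) := by
  refine TopologicalSpace.tendsto_nhds_generateFrom_iff.2 ?_
  rintro s (⟨U, -, rfl⟩ | ⟨K, hK, -, rfl⟩) hxs
  · exact univ_mem' fun y => hxs.mono (inter_subset_inter_left U (by simp [FH.pair]))
  · exact mem_of_superset hK.compl_mem_cocompact fun y hy =>
      insert_subset (hxs (mem_singleton x)) (singleton_subset_iff.2 hy)

theorem subset_compl_mem_nhds_fellF {K : Set X} (hK : IsCompact K) {x : X} (hx : x ∉ K) :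
    {A : FH X | (A : Set X) ⊆ Kᶜ} ∈
      @nhds _ (fellF X) ⟨{x}, finite_singleton x, singleton_nonempty x⟩ :=
  have hKne : K ≠ univ := fun h => hx (h ▸ mem_univ x)
  @IsOpen.mem_nhds _ (fellF X) _ _
    (TopologicalSpace.isOpen_generateFrom_of_mem (Or.inr ⟨K, hK, hKne, rfl⟩))
    (singleton_subset_iff.2 hx)

end Fell

/-- If `D` is discrete of cardinality `ω₁`, then for every `x ∈ D` the point `{x}`
of `(F(D), τ_F)` has no `ω^ω`-base of neighborhoods; in particular `(F(D), τ_F)`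
does not have an `ω^ω`-base. -/
theorem finiteHyperspace_fell_discrete_omega1_no_omegaOmegaBase
    {D : Type*} [TopologicalSpace D] [DiscreteTopology D]
    (hD : Cardinal.mk D = Cardinal.aleph 1) (x : D) :
    ¬ HasOmegaOmegaBaseAt (fellF D)
        ⟨{x}, Set.finite_singleton x, Set.singleton_nonempty x⟩ := by
  intro hbase
  have hunc : ¬ ({x}ᶜ : Set D).Countable := fun h => by
    have : Countable D :=
      countable_univ_iff.1 (union_compl_self {x} ▸ (countable_singleton x).union h)
    exact (Cardinal.mk_le_aleph0_iff.2 this).not_gt (hD ▸ Cardinal.aleph0_lt_aleph_one)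
  have hW (y : D) (hy : y ∈ ({x}ᶜ : Set D)) :=
    subset_compl_mem_nhds_fellF isCompact_singleton fun hxy : x = y => hy hxy.symm
  obtain ⟨T, -, hT, hTnhds⟩ := hbase.exists_infinite_biInter_mem_nhds hunc hW
  have hev : ∀ᶠ y in cofinite, FH.pair x y ∈ ⋂ y ∈ T, {A : FH D | (A : Set D) ⊆ {y}ᶜ} :=
    cocompact_eq_cofinite D ▸ tendsto_pair_cocompact_nhds_fellF x hTnhds
  obtain ⟨y, hyT, hy⟩ := ((frequently_cofinite_iff_infinite.2 hT).and_eventually hev).exists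
  exact mem_iInter₂.1 hy y hyT (mem_insert_of_mem x rfl) rfl
end

section
/- Let D be a discrete topological space of cardinality ω₁. Then the hyperspace CL(D) of nonempty (closed) subsets of D with the Vietoris topology does not have an ω^ω-base; in fact, the point D ∈ CL(D) has no ω^ω-base of neighborhoods. -/
open Set Filter Topology

/-! Every `x ∈ D` gives a neighbourhood `{H | x ∈ H}` of `D`, so an `ω^ω`-base `U` assigns to it
an index `α x` with `U (α x) ⊆ {H | x ∈ H}`. As `D` is uncountable, a single `β` bounds
infinitely many `α x`. On the other hand `U β` contains every `H ⊇ F` for some finite `F`; for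
`x ∉ F` with `α x ≤ β` this puts `D \ {x}` into `U β ⊆ U (α x)`, so `x ∈ D \ {x}`. -/

section Combinatorics

variable {D E : Type*}

lemma exists_not_countable_inter_preimage_singleton [Countable E] {B : Set D}
    (hB : ¬ B.Countable) (f : D → E) : ∃ e, ¬ (B ∩ f ⁻¹' {e}).Countable := by
  by_contra! h
  refine hB ((countable_iUnion h).mono fun x hx => ?_)
  exact mem_iUnion.2 ⟨f x, hx, rfl⟩

/-- Refine `univ` coordinate by coordinate, keeping an uncountable set at each stage. -/
lemma exists_forall_not_countable_setOf_agree [Countable E] [Uncountable D] (α : D → ℕ → E) :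
    ∃ σ : ℕ → E, ∀ n, ¬ {x | ∀ k < n, α x k = σ k}.Countable := by
  let next (B : {B : Set D // ¬ B.Countable}) (n : ℕ) : E :=
    (exists_not_countable_inter_preimage_singleton B.2 (α · n)).choose
  let A (n : ℕ) : {B : Set D // ¬ B.Countable} :=
    Nat.rec (motive := fun _ => {B : Set D // ¬ B.Countable}) ⟨univ, not_countable_univ⟩
    (fun n B => ⟨B.1 ∩ (α · n) ⁻¹' {next B n},
      (exists_not_countable_inter_preimage_singleton B.2 (α · n)).choose_spec⟩) n
  refine ⟨fun n => next (A n) n, fun n => ?_⟩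
  suffices (A n : Set D) ⊆ {x | ∀ k < n, α x k = next (A k) k} from
    fun h => (A n).2 (h.mono this)
  induction n with
  | zero => simp
  | succ n ih =>
    rintro x ⟨hx, hxn⟩ k hk
    rcases Nat.lt_succ_iff_lt_or_eq.1 hk with hk | rfl
    · exact ih hx k hk
    · exact hxn

lemma exists_infinite_setOf_le_of_agree {α : D → ℕ → ℕ} {σ : ℕ → ℕ}
    (h : ∀ n, {x | ∀ k < n, α x k = σ k}.Infinite) : ∃ β : ℕ → ℕ, {x | α x ≤ β}.Infinite := by
  classical
  choose G hGσ hGcard using fun n => (h n).exists_subset_card_eq n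
  set β : ℕ → ℕ := fun k => max (σ k) (((Finset.range (k + 1)).biUnion G).sup (α · k))
  have hGβ : ∀ n, (G n : Set D) ⊆ {x | α x ≤ β} := by
    intro n x hx k
    rcases lt_or_ge k n with hk | hk
    · exact (hGσ n hx k hk).trans_le (le_max_left _ _)
    · exact le_max_of_le_right <| Finset.le_sup (f := (α · k)) <|
        Finset.mem_biUnion.2 ⟨n, Finset.mem_range.2 (by omega), hx⟩
  refine ⟨β, fun hfin => ?_⟩
  have := ncard_le_ncard (hGβ (ncard {x | α x ≤ β} + 1)) hfin
  rw [ncard_coe_finset, hGcard] at this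
  omega

theorem exists_infinite_setOf_le [Uncountable D] (α : D → ℕ → ℕ) :
    ∃ β : ℕ → ℕ, {x | α x ≤ β}.Infinite :=
  let ⟨_, hσ⟩ := exists_forall_not_countable_setOf_agree α
  exists_infinite_setOf_le_of_agree fun n hfin => hσ n hfin.countable

end Combinatorics

section Vietoris

variable {X : Type*} [TopologicalSpace X]

lemma isOpen_vietoris_setOf_inter_nonempty {U : Set X} (hU : IsOpen U) :
    IsOpen[vietoris X] {H : CL X | ((H : Set X) ∩ U).Nonempty} :=
  TopologicalSpace.isOpen_generateFrom_of_mem (Or.inr ⟨U, hU, rfl⟩)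

lemma iInf_principal_setOf_mem_le_nhds_vietoris {A : CL X} (hA : (A : Set X) = univ) :
    ⨅ x, 𝓟 {H : CL X | x ∈ (H : Set X)} ≤ @nhds _ (vietoris X) A := by
  rw [vietoris, TopologicalSpace.nhds_generateFrom]
  refine le_iInf₂ fun s ⟨hAs, hs⟩ => ?_
  rcases hs with ⟨U, -, rfl⟩ | ⟨U, -, rfl⟩
  · simp [univ_subset_iff.1 (hA ▸ hAs : univ ⊆ U)]
  · obtain ⟨y, -, hy⟩ := hAs
    exact iInf_le_of_le y (principal_mono.2 fun H hH => ⟨y, hH, hy⟩)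

lemma exists_finite_forall_mem_of_mem_nhds_vietoris_univ {A : CL X} (hA : (A : Set X) = univ)
    {V : Set (CL X)} (hV : V ∈ @nhds _ (vietoris X) A) :
    ∃ F : Set X, F.Finite ∧ ∀ H : CL X, F ⊆ H → H ∈ V := by
  obtain ⟨F, hF, hFV⟩ := (hasBasis_iInf_principal_finite _).mem_iff.1
    (iInf_principal_setOf_mem_le_nhds_vietoris hA hV)
  exact ⟨F, hF, fun H hH => hFV (mem_iInter₂.2 fun _ hx => hH hx)⟩

end Vietoris

/-- If `D` is discrete of cardinality `ω₁`, then the point `D ∈ CL(D)` has no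
`ω^ω`-base of neighborhoods in `(CL(D), τ_V)`; in particular `(CL(D), τ_V)`
does not have an `ω^ω`-base. -/
theorem hyperspace_vietoris_discrete_omega1_no_omegaOmegaBase
    {D : Type*} [TopologicalSpace D] [DiscreteTopology D]
    (hD : Cardinal.mk D = Cardinal.aleph 1) :
    ∀ A : CL D, (A : Set D) = Set.univ → ¬ HasOmegaOmegaBaseAt (vietoris D) A := by
  rintro A hA ⟨U, hU_nhds, hU_anti, hU_base⟩
  have : Uncountable D := by
    rw [← not_countable_iff, ← Cardinal.mk_le_aleph0_iff, hD]
    exact Cardinal.aleph0_lt_aleph_one.not_ge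
  have hA_mem (x : D) : ((A : Set D) ∩ {x}).Nonempty := by simp [hA]
  choose α hα using fun x : D => hU_base _ <| @IsOpen.mem_nhds _ (vietoris D) _ _
    (isOpen_vietoris_setOf_inter_nonempty (isOpen_discrete {x})) (hA_mem x)
  obtain ⟨β, hβ⟩ := exists_infinite_setOf_le α
  obtain ⟨F, hF, hFU⟩ := exists_finite_forall_mem_of_mem_nhds_vietoris_univ hA (hU_nhds β)
  obtain ⟨x, hxβ, hxF⟩ := (hβ.sdiff hF).nonempty
  let H : CL D := ⟨{x}ᶜ, nonempty_compl_of_nontrivial x, isClosed_discrete _⟩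
  have hH : H ∈ U (α x) := hU_anti _ _ hxβ (hFU H (subset_compl_singleton_iff.2 hxF))
  simpa [H] using hα x hH
end

section
/- Let X be a metrizable space and A a nonempty closed nowhere dense subset of X. If A is σ-compact, then A has an ω^ω-base of neighborhoods in X, i.e., there is a family {U_α : α ∈ ω^ω} of open sets containing A such that U_β ⊆ U_α whenever α ≤ β, and every open set containing A contains some U_α. -/
open Set Filter Topology

/-- A set `A` has an `ω^ω`-base of neighborhoods in `X`: a family `{U_α : α ∈ ω^ω}` of
open sets containing `A`, with `U_β ⊆ U_α` whenever `α ≤ β` pointwise, such that every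
open set containing `A` contains some `U_α`. -/
def HasOmegaOmegaNhdBase {X : Type*} [TopologicalSpace X] (A : Set X) : Prop :=
  ∃ U : (ℕ → ℕ) → Set X, (∀ α, IsOpen (U α) ∧ A ⊆ U α) ∧
    (∀ α β : ℕ → ℕ, α ≤ β → U β ⊆ U α) ∧
    ∀ V : Set X, IsOpen V → A ⊆ V → ∃ α, U α ⊆ V

/-- In a metrizable space, a nonempty closed nowhere dense σ-compact set has an
`ω^ω`-base of neighborhoods. -/
theorem sigmaCompact_hasOmegaOmegaNhdBase {X : Type*} [TopologicalSpace X]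
    [TopologicalSpace.MetrizableSpace X] (A : Set X) (hne : A.Nonempty)
    (hcl : IsClosed A) (hnd : IsNowhereDense A) (hsc : IsSigmaCompact A) :
    HasOmegaOmegaNhdBase A := by
  letI : MetricSpace X := TopologicalSpace.metrizableSpaceMetric X
  obtain ⟨K, hK, hKA⟩ := hsc
  refine ⟨fun α => ⋃ n, Metric.thickening (1 / (α n + 1)) (K n), ?_, ?_, ?_⟩
  · intro α
    constructor
    · exact isOpen_iUnion fun n => Metric.isOpen_thickening
    · rw [← hKA]
      refine iUnion_mono fun n => Metric.self_subset_thickening ?_ _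
      positivity
  · intro α β hle
    refine iUnion_mono fun n => Metric.thickening_mono ?_ _
    apply one_div_le_one_div_of_le
    · positivity
    · have h := hle n
      have : (α n : ℝ) ≤ β n := Nat.cast_le.mpr h
      linarith
  · intro V hV hAV
    have h : ∀ n, ∃ δ > 0, Metric.thickening δ (K n) ⊆ V := fun n =>
      (hK n).exists_thickening_subset_open hV (hKA ▸ subset_iUnion K n |>.trans hAV)
    choose δ hδpos hδ using h
    have h2 : ∀ n, ∃ m : ℕ, 1 / ((m : ℝ) + 1) < δ n := fun n =>
      exists_nat_one_div_lt (hδpos n)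
    choose α hα using h2
    exact ⟨α, iUnion_subset fun n =>
      (Metric.thickening_mono (le_of_lt (hα n)) _).trans (hδ n)⟩
end

section
/- Let X be a separable metrizable space in which the boundary of every closed subset is σ-compact. Then the hyperspace CL(X) with the Vietoris topology has an ω^ω-base. -/
open Set Filter Topology

/-! Let `frontier A = ⋃ n, K n` with every `K n` compact. The Vietoris neighbourhood filter of `A`
is the infimum of an upper part, the image of `𝓝ˢ A` under `O ↦ {B | B ⊆ O}`, and a lower part
generated by the sets `{B | B meets W}` with `W` meeting `A`; with a countable base of `X` the
lower part is countably generated. For the upper part,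
`𝓝ˢ A = 𝓟 (interior A) ⊔ ⨆ n, 𝓝ˢ (K n)`, each `𝓝ˢ (K n)` is countably generated by uniform
thickenings of `K n`, and choosing one thickening for every `n` indexes a basis of the supremum
antitonely by `ℕ → ℕ`. -/

namespace Filter

variable {α β : Type*} {f g : Filter α}

section AntitoneBasis

variable {ι : Type*} [SemilatticeSup ι] {s t : ι → Set α}

theorem HasAntitoneBasis.sup (hf : f.HasAntitoneBasis s) (hg : g.HasAntitoneBasis t) :
    (f ⊔ g).HasAntitoneBasis fun i => s i ∪ t i :=
  ⟨(hf.1.sup hg.1).to_hasBasis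
      (fun i _ => ⟨i.1 ⊔ i.2, trivial,
        union_subset_union (hf.antitone le_sup_left) (hg.antitone le_sup_right)⟩)
      fun i _ => ⟨(i, i), ⟨trivial, trivial⟩, subset_rfl⟩,
    fun _ _ hij => union_subset_union (hf.antitone hij) (hg.antitone hij)⟩

theorem HasAntitoneBasis.inf (hf : f.HasAntitoneBasis s) (hg : g.HasAntitoneBasis t) :
    (f ⊓ g).HasAntitoneBasis fun i => s i ∩ t i :=
  ⟨(hf.1.inf hg.1).to_hasBasis
      (fun i _ => ⟨i.1 ⊔ i.2, trivial,
        inter_subset_inter (hf.antitone le_sup_left) (hg.antitone le_sup_right)⟩)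
      fun i _ => ⟨(i, i), ⟨trivial, trivial⟩, subset_rfl⟩,
    fun _ _ hij => inter_subset_inter (hf.antitone hij) (hg.antitone hij)⟩

end AntitoneBasis

theorem HasAntitoneBasis.lift' {ι : Type*} [Preorder ι] {s : ι → Set α} {h : Set α → Set β}
    (hf : f.HasAntitoneBasis s) (hh : Monotone h) : (f.lift' h).HasAntitoneBasis (h ∘ s) :=
  ⟨hf.1.lift' hh, hh.comp_antitone hf.antitone⟩

theorem HasAntitoneBasis.iSup {κ : Type*} {ι : κ → Type*} [∀ k, Preorder (ι k)]
    {f : κ → Filter α} {s : ∀ k, ι k → Set α} (hf : ∀ k, (f k).HasAntitoneBasis (s k)) :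
    (⨆ k, f k).HasAntitoneBasis fun i : (∀ k, ι k) => ⋃ k, s k (i k) :=
  ⟨(hasBasis_iSup fun k => (hf k).1).to_hasBasis (fun i _ => ⟨i, trivial, subset_rfl⟩)
      fun i _ => ⟨i, fun _ => trivial, subset_rfl⟩,
    fun _ _ hij => iUnion_mono fun k => (hf k).antitone (hij k)⟩

def HasOmegaOmegaBasis (f : Filter α) : Prop :=
  ∃ U : (ℕ → ℕ) → Set α, f.HasAntitoneBasis U

namespace HasOmegaOmegaBasis

theorem of_isCountablyGenerated (f : Filter α) [f.IsCountablyGenerated] :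
    f.HasOmegaOmegaBasis := by
  obtain ⟨x, hx⟩ := f.exists_antitone_basis
  exact ⟨fun i => x (i 0), hx.1.to_hasBasis (fun n _ => ⟨fun _ => n, trivial, subset_rfl⟩)
    (fun i _ => ⟨i 0, trivial, subset_rfl⟩), fun _ _ hij => hx.antitone (hij 0)⟩

theorem sup (hf : f.HasOmegaOmegaBasis) (hg : g.HasOmegaOmegaBasis) :
    (f ⊔ g).HasOmegaOmegaBasis :=
  let ⟨_, hU⟩ := hf; let ⟨_, hV⟩ := hg; ⟨_, hU.sup hV⟩

theorem inf (hf : f.HasOmegaOmegaBasis) (hg : g.HasOmegaOmegaBasis) :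
    (f ⊓ g).HasOmegaOmegaBasis :=
  let ⟨_, hU⟩ := hf; let ⟨_, hV⟩ := hg; ⟨_, hU.inf hV⟩

theorem lift' (hf : f.HasOmegaOmegaBasis) {h : Set α → Set β} (hh : Monotone h) :
    (f.lift' h).HasOmegaOmegaBasis :=
  let ⟨_, hU⟩ := hf; ⟨_, hU.lift' hh⟩

theorem iSup_of_isCountablyGenerated (f : ℕ → Filter α) [∀ n, (f n).IsCountablyGenerated] :
    (⨆ n, f n).HasOmegaOmegaBasis := by
  choose x hx using fun n => (f n).exists_antitone_basis
  exact ⟨_, HasAntitoneBasis.iSup hx⟩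

theorem hasOmegaOmegaBaseAt {Y : Type*} {t : TopologicalSpace Y} {y : Y}
    (h : (@nhds Y t y).HasOmegaOmegaBasis) : HasOmegaOmegaBaseAt t y :=
  let ⟨U, hU⟩ := h; ⟨U, hU.mem, fun _ _ hαβ => hU.antitone hαβ, fun _ hV => hU.mem_iff.1 hV⟩

end HasOmegaOmegaBasis

end Filter

open scoped Uniformity

section NhdsSet

variable {X : Type*} [UniformSpace X] [(𝓤 X).IsCountablyGenerated]

theorem IsCompact.isCountablyGenerated_nhdsSet {K : Set X} (hK : IsCompact K) :
    (𝓝ˢ K).IsCountablyGenerated :=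
  let ⟨_, hV⟩ := (𝓤 X).exists_antitone_basis
  (hK.nhdsSet_basis_uniformity hV.1).isCountablyGenerated

theorem IsSigmaCompact.hasOmegaOmegaBasis_nhdsSet {S : Set X} (hS : IsSigmaCompact S) :
    (𝓝ˢ S).HasOmegaOmegaBasis := by
  obtain ⟨K, hK, rfl⟩ := hS
  have := fun n => (hK n).isCountablyGenerated_nhdsSet
  rw [nhdsSet_iUnion]
  exact .iSup_of_isCountablyGenerated _

theorem IsClosed.hasOmegaOmegaBasis_nhdsSet {A : Set X} (hA : IsClosed A)
    (h : IsSigmaCompact (frontier A)) : (𝓝ˢ A).HasOmegaOmegaBasis := by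
  rw [← hA.closure_eq, closure_eq_interior_union_frontier, nhdsSet_union,
    isOpen_interior.nhdsSet_eq]
  exact (HasOmegaOmegaBasis.of_isCountablyGenerated _).sup h.hasOmegaOmegaBasis_nhdsSet

end NhdsSet

section Vietoris

open TopologicalSpace

variable {X : Type*} [TopologicalSpace X]

theorem isOpen_vietoris_upper {O : Set X} (hO : IsOpen O) :
    IsOpen[vietoris X] {B : CL X | (B : Set X) ⊆ O} :=
  isOpen_generateFrom_of_mem (.inl ⟨O, hO, rfl⟩)

theorem isOpen_vietoris_lower {O : Set X} (hO : IsOpen O) :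
    IsOpen[vietoris X] {B : CL X | ((B : Set X) ∩ O).Nonempty} :=
  isOpen_generateFrom_of_mem (.inr ⟨O, hO, rfl⟩)

theorem monotone_setOf_subset : Monotone fun O : Set X => {B : CL X | (B : Set X) ⊆ O} :=
  fun _ _ hOO' _ hB => hB.trans hOO'

theorem nhds_vietoris [SecondCountableTopology X] (A : CL X) :
    @nhds _ (vietoris X) A =
      (𝓝ˢ (A : Set X)).lift' (fun O => {B : CL X | (B : Set X) ⊆ O}) ⊓
        ⨅ (W : countableBasis X) (_ : ((A : Set X) ∩ W).Nonempty),
          𝓟 {B : CL X | ((B : Set X) ∩ W).Nonempty} := by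
  let := vietoris X
  refine le_antisymm (le_inf ?_ ?_) ?_
  · exact ((hasBasis_nhdsSet _).lift' monotone_setOf_subset).ge_iff.2 fun O ⟨hO, hAO⟩ =>
      (isOpen_vietoris_upper hO).mem_nhds hAO
  · exact le_iInf₂ fun W hAW => le_principal_iff.2 <|
      (isOpen_vietoris_lower (isOpen_of_mem_countableBasis W.2)).mem_nhds hAW
  rw [vietoris, nhds_generateFrom]
  refine le_iInf₂ ?_
  rintro s ⟨hAs, ⟨O, hO, rfl⟩ | ⟨O, hO, rfl⟩⟩
  · exact le_principal_iff.2 <| mem_inf_of_left <|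
      (mem_lift'_sets monotone_setOf_subset).2 ⟨O, hO.mem_nhdsSet.2 hAs, subset_rfl⟩
  · obtain ⟨x, hxA, hxO⟩ := hAs
    obtain ⟨W, hW, hxW, hWO⟩ :=
      (isBasis_countableBasis X).exists_subset_of_mem_open hxO hO
    exact le_principal_iff.2 <| mem_inf_of_right <|
      mem_iInf_of_mem ⟨W, hW⟩ <| mem_iInf_of_mem ⟨x, hxA, hxW⟩ <|
        mem_principal.2 fun B ⟨y, hyB, hyW⟩ => ⟨y, hyB, hWO hyW⟩

end Vietoris

/-- If `X` is a separable metrizable space in which the boundary of every closed set is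
σ-compact, then `(CL(X), τ_V)` has an `ω^ω`-base. -/
theorem separable_boundary_sigmaCompact_vietoris_omegaOmegaBase
    {X : Type*} [TopologicalSpace X] [TopologicalSpace.MetrizableSpace X]
    [TopologicalSpace.SeparableSpace X]
    (h : ∀ A : Set X, IsClosed A → IsSigmaCompact (frontier A)) :
    ∀ A : CL X, HasOmegaOmegaBaseAt (vietoris X) A := by
  intro A
  let := TopologicalSpace.pseudoMetrizableSpaceUniformity X
  have := TopologicalSpace.pseudoMetrizableSpaceUniformity_countably_generated X
  refine HasOmegaOmegaBasis.hasOmegaOmegaBaseAt ?_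
  rw [nhds_vietoris]
  exact ((A.2.2.hasOmegaOmegaBasis_nhdsSet (h A A.2.2)).lift' monotone_setOf_subset).inf
    (.of_isCountablyGenerated _)
end

section
/- Let X be a Polish space. Then the hyperspace CL(X) with the Fell topology has an ω^ω-base at every point, consisting of basic neighborhoods of the form (⋂ᵢ Uᵢ⁻) ∩ ((g(α))^c)⁺. -/
open Set Filter Topology

/-- A basic Fell neighborhood: a set of the form `(⋂ᵢ Uᵢ⁻) ∩ (Kᶜ)⁺` with the `Uᵢ` open
and `K` compact. -/
def IsFellBasic (X : Type*) [TopologicalSpace X] (S : Set (CL X)) : Prop :=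
  ∃ (n : ℕ) (U : Fin n → Set X) (K : Set X), (∀ i, IsOpen (U i)) ∧ IsCompact K ∧
    S = {A : CL X | (∀ i, ((A : Set X) ∩ U i).Nonempty) ∧ (A : Set X) ⊆ Kᶜ}

/-! The compact sets avoiding `A` are the compact subsets of the open, hence Polish, set `Aᶜ`,
and by Christensen's theorem these have a monotone cofinal family `K : ω^ω → K(Aᶜ)`: in a
complete metric space with dense sequence `x`, take
`K α = ⋂ₖ ⋃_{n ≤ α k} closedBall (x n) (1/(k+1))`.
Second countability gives countably many open sets `V j` meeting `A` such that every open set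
meeting `A` contains one of them. Then `B α = (⋂_{j < α 0} (V j)⁻) ∩ ((K α)ᶜ)⁺` is antitone in `α`
and absorbs every subbasic Fell neighborhood of `A`; as `ω^ω` is directed, it is a base at `A`. -/

section Christensen

variable {Y : Type*} [PseudoMetricSpace Y]

def christensenCompact (x : ℕ → Y) (α : ℕ → ℕ) : Set Y :=
  ⋂ k : ℕ, ⋃ n ∈ Iic (α k), Metric.closedBall (x n) (1 / ((k : ℝ) + 1))

lemma monotone_christensenCompact (x : ℕ → Y) : Monotone (christensenCompact x) :=
  fun _ _ h => iInter_mono fun k => biUnion_subset_biUnion_left (Iic_subset_Iic.2 (h k))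

lemma isCompact_christensenCompact [CompleteSpace Y] (x : ℕ → Y) (α : ℕ → ℕ) :
    IsCompact (christensenCompact x α) := by
  refine TotallyBounded.isCompact_of_isClosed ?_ <|
    isClosed_iInter fun k => (finite_Iic _).isClosed_biUnion fun n _ => Metric.isClosed_closedBall
  refine Metric.totallyBounded_iff.2 fun ε hε => ?_
  obtain ⟨k, hk⟩ := exists_nat_one_div_lt hε
  refine ⟨x '' Iic (α k), (finite_Iic _).image x, ?_⟩
  rw [biUnion_image]
  exact (iInter_subset _ k).trans <|
    iUnion₂_mono fun n _ => Metric.closedBall_subset_ball hk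

lemma exists_subset_christensenCompact {x : ℕ → Y} (hx : DenseRange x) {L : Set Y}
    (hL : IsCompact L) : ∃ α, L ⊆ christensenCompact x α := by
  have hcover : ∀ k : ℕ, ∃ m, L ⊆ ⋃ n ∈ Iic m, Metric.ball (x n) (1 / ((k : ℝ) + 1)) := by
    intro k
    refine hL.elim_directed_cover _ (fun m => isOpen_biUnion fun n _ => Metric.isOpen_ball)
      (fun y _ => ?_) (Monotone.directed_le fun m m' h => biUnion_subset_biUnion_left
        (Iic_subset_Iic.2 h))
    obtain ⟨n, hn⟩ := Metric.denseRange_iff.1 hx y _ Nat.one_div_pos_of_nat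
    exact mem_iUnion.2 ⟨n, mem_biUnion (mem_Iic.2 le_rfl) hn⟩
  choose α hα using hcover
  exact ⟨α, subset_iInter fun k => (hα k).trans <|
    iUnion₂_mono fun n _ => Metric.ball_subset_closedBall⟩

end Christensen

theorem exists_monotone_cofinal_isCompact (Y : Type*) [TopologicalSpace Y] [PolishSpace Y] :
    ∃ K : (ℕ → ℕ) → Set Y, Monotone K ∧ (∀ α, IsCompact (K α)) ∧
      ∀ L, IsCompact L → ∃ α, L ⊆ K α := by
  let := TopologicalSpace.upgradeIsCompletelyMetrizable Y
  cases isEmpty_or_nonempty Y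
  · exact ⟨fun _ => ∅, monotone_const, fun _ => isCompact_empty,
      fun L _ => ⟨0, (eq_empty_of_isEmpty L).subset⟩⟩
  obtain ⟨x, hx⟩ := TopologicalSpace.exists_dense_seq Y
  exact ⟨christensenCompact x, monotone_christensenCompact x,
    isCompact_christensenCompact x, fun L hL => exists_subset_christensenCompact hx hL⟩

theorem IsOpen.exists_monotone_cofinal_isCompact {X : Type*} [TopologicalSpace X] [PolishSpace X]
    {W : Set X} (hW : IsOpen W) :
    ∃ K : (ℕ → ℕ) → Set X, Monotone K ∧ (∀ α, IsCompact (K α)) ∧ (∀ α, K α ⊆ W) ∧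
      ∀ L, IsCompact L → L ⊆ W → ∃ α, L ⊆ K α := by
  have := hW.polishSpace
  obtain ⟨K, hKmono, hK, hKcof⟩ := _root_.exists_monotone_cofinal_isCompact W
  refine ⟨fun α => (↑) '' K α, fun α β h => image_mono (hKmono h),
    fun α => (hK α).image continuous_subtype_val, fun α => Subtype.coe_image_subset _ _,
    fun L hL hLW => ?_⟩
  have hLval : (↑) '' ((↑) ⁻¹' L : Set W) = L := by
    rw [Subtype.image_preimage_coe, inter_eq_right.2 hLW]
  obtain ⟨α, hα⟩ := hKcof ((↑) ⁻¹' L) (by rwa [Subtype.isCompact_iff, hLval])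
  exact ⟨α, hLval ▸ image_mono hα⟩

open TopologicalSpace in
theorem exists_seq_isOpen_inter_nonempty_cofinal {X : Type*} [TopologicalSpace X]
    [SecondCountableTopology X] {A : Set X} (hA : A.Nonempty) :
    ∃ V : ℕ → Set X, (∀ j, IsOpen (V j)) ∧ (∀ j, (A ∩ V j).Nonempty) ∧
      ∀ U, IsOpen U → (A ∩ U).Nonempty → ∃ j, V j ⊆ U := by
  set S := insert univ {v ∈ countableBasis X | (A ∩ v).Nonempty}
  obtain ⟨V, hV⟩ : ∃ V : ℕ → Set X, S = range V :=
    (((countable_countableBasis X).mono (sep_subset _ _)).insert univ).exists_eq_range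
      (insert_nonempty univ _)
  have hVS : ∀ j, V j ∈ S := fun j => hV ▸ mem_range_self j
  refine ⟨V, fun j => ?_, fun j => ?_, fun U hU ⟨a, haA, haU⟩ => ?_⟩
  · rcases hVS j with h | h
    · exact h ▸ isOpen_univ
    · exact isOpen_of_mem_countableBasis h.1
  · rcases hVS j with h | h
    · rwa [h, inter_univ]
    · exact h.2
  · obtain ⟨v, hv, hav, hvU⟩ := (isBasis_countableBasis X).exists_subset_of_mem_open haU hU
    obtain ⟨j, rfl⟩ : v ∈ range V := hV ▸ mem_insert_of_mem _ ⟨hv, a, haA, hav⟩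
    exact ⟨j, hvU⟩

theorem exists_subset_of_mem_nhds_generateFrom {Y ι : Type*} [SemilatticeSup ι] [Nonempty ι]
    {g : Set (Set Y)} {y : Y} {B : ι → Set Y} (hB : Antitone B)
    (hg : ∀ s ∈ g, y ∈ s → ∃ i, B i ⊆ s) {V : Set Y}
    (hV : V ∈ @nhds Y (TopologicalSpace.generateFrom g) y) : ∃ i, B i ⊆ V := by
  have hle : ⨅ i, 𝓟 (B i) ≤ @nhds Y (TopologicalSpace.generateFrom g) y := by
    rw [TopologicalSpace.nhds_generateFrom]
    refine le_iInf₂ fun s ⟨hys, hsg⟩ => ?_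
    obtain ⟨i, hi⟩ := hg s hsg hys
    exact iInf_le_of_le i (principal_mono.2 hi)
  obtain ⟨i, -, hi⟩ := (hasBasis_iInf_principal hB.directed_ge).mem_iff.1 (hle hV)
  exact ⟨i, hi⟩

section Fell

variable {X : Type*} [TopologicalSpace X]

theorem IsFellBasic.isOpen {S : Set (CL X)} (hS : IsFellBasic X S) : IsOpen[fell X] S := by
  let := fell X
  obtain ⟨n, U, K, hU, hK, rfl⟩ := hS
  rw [ofPred_and, ofPred_forall]
  exact (isOpen_iInter_of_finite fun i => TopologicalSpace.isOpen_generateFrom_of_mem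
    (Or.inl ⟨U i, hU i, rfl⟩)).inter
    (TopologicalSpace.isOpen_generateFrom_of_mem (Or.inr ⟨K, hK, rfl⟩))

def fellNbhd (V : ℕ → Set X) (K : (ℕ → ℕ) → Set X) (α : ℕ → ℕ) : Set (CL X) :=
  {C | (∀ i : Fin (α 0), ((C : Set X) ∩ V i).Nonempty) ∧ (C : Set X) ⊆ (K α)ᶜ}

lemma isFellBasic_fellNbhd {V : ℕ → Set X} {K : (ℕ → ℕ) → Set X} (hV : ∀ j, IsOpen (V j))
    (hK : ∀ α, IsCompact (K α)) (α : ℕ → ℕ) : IsFellBasic X (fellNbhd V K α) :=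
  ⟨α 0, fun i => V i, K α, fun i => hV i, hK α, rfl⟩

lemma antitone_fellNbhd (V : ℕ → Set X) {K : (ℕ → ℕ) → Set X} (hK : Monotone K) :
    Antitone (fellNbhd V K) :=
  fun _ _ h _ hC => ⟨fun i => hC.1 (Fin.castLE (h 0) i),
    hC.2.trans (compl_subset_compl.2 (hK h))⟩

end Fell

/-- If `X` is Polish, then `(CL(X), τ_F)` has at every point an `ω^ω`-base consisting
of basic neighborhoods. -/
theorem polish_fell_omegaOmegaBase_basic
    {X : Type*} [TopologicalSpace X] [PolishSpace X] :
    ∀ A : CL X, ∃ B : (ℕ → ℕ) → Set (CL X),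
      (∀ α, IsFellBasic X (B α) ∧ B α ∈ @nhds _ (fell X) A) ∧
      (∀ α β : ℕ → ℕ, α ≤ β → B β ⊆ B α) ∧
      ∀ V ∈ @nhds _ (fell X) A, ∃ α, B α ⊆ V := by
  intro A
  obtain ⟨V, hVopen, hAV, hVcof⟩ := exists_seq_isOpen_inter_nonempty_cofinal A.2.1
  obtain ⟨K, hKmono, hK, hKA, hKcof⟩ := A.2.2.isOpen_compl.exists_monotone_cofinal_isCompact
  have hBasic := isFellBasic_fellNbhd hVopen hK
  have hB := antitone_fellNbhd V hKmono
  refine ⟨fellNbhd V K, fun α => ⟨hBasic α, @IsOpen.mem_nhds _ (fell X) _ _ (hBasic α).isOpen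
    ⟨fun i => hAV i, subset_compl_comm.1 (hKA α)⟩⟩, fun _ _ h => hB h,
    fun W hW => exists_subset_of_mem_nhds_generateFrom hB ?_ hW⟩
  rintro s (⟨U, hU, rfl⟩ | ⟨L, hL, rfl⟩) hAs
  · obtain ⟨j, hj⟩ := hVcof U hU hAs
    exact ⟨fun _ => j + 1, fun C hC => (hC.1 (Fin.last j)).mono (inter_subset_inter_right _ hj)⟩
  · obtain ⟨α, hα⟩ := hKcof L hL (subset_compl_comm.1 hAs)
    exact ⟨α, fun C hC => hC.2.trans (compl_subset_compl.2 hα)⟩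
end

section
/- Let J(ω) be the space {x} ∪ ⋃_{n∈ω} X_n, where the X_n = {x_{ni} : i ∈ ω} are pairwise disjoint countable sets, each x_{ni} is isolated, and basic neighborhoods of x are the sets {x} ∪ ⋃_{n≥k} X_n for k ∈ ω. Then the hyperspace CL(J(ω)) with the Fell topology is not Fréchet–Urysohn: the closed set X₀ lies in the closure of the family {A_{n,i} : n ≥ 1, i ∈ ω}, where A_{n,i} = {x_{0j} : j ≤ n} ∪ {x_{ni}}, but no sequence from this family converges to X₀. -/
open Set Filter Topology

/-- The space `J(ω)`: the point `none` is `x`, and `some (n, i)` is `x_{ni}`. -/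
def Jspace := Option (ℕ × ℕ)

/-- Topology of `J(ω)`: every `x_{ni}` is isolated, and the basic neighborhoods of `x`
are the sets `{x} ∪ ⋃_{n ≥ k} X_n`. -/
instance : TopologicalSpace Jspace :=
  TopologicalSpace.generateFrom
    ({S | ∃ p : ℕ × ℕ, S = {Option.some p}} ∪
     {S | ∃ k : ℕ, S = insert Option.none {q : Jspace | ∃ p : ℕ × ℕ, k ≤ p.1 ∧ q = Option.some p}})

/-- The family `{A_{n,i} : n ≥ 1, i ∈ ω}` with `A_{n,i} = {x_{0j} : j ≤ n} ∪ {x_{ni}}`. -/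
def Jfamily : Set (CL Jspace) :=
  {A | ∃ n i : ℕ, 1 ≤ n ∧
    (A : Set Jspace) = {q : Jspace | ∃ j : ℕ, j ≤ n ∧ q = Option.some (0, j)} ∪ {Option.some (n, i)}}

/-! The sets `A_{n,i}` converge to `X₀` along the filter "for all large `n`, for cofinitely many
`i`": a hit set `U⁻` around `X₀` contains some `x_{0j}`, hence every `A_{n,i}` with `n ≥ j`, and a
miss set `(Kᶜ)⁺` around `X₀` excludes only the finitely many `i` with `x_{ni} ∈ K`. Conversely, if
`A_{n_m,i_m} → X₀` then `n_m → ∞`, so `x_{n_m i_m} → x` and `K = {x} ∪ {x_{n_m i_m}}` is a compact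
set disjoint from `X₀` that every `A_{n_m,i_m}` meets. -/

namespace Filter

instance curry_neBot {α β : Type*} {l : Filter α} {m : Filter β} [NeBot l] [NeBot m] :
    NeBot (l.curry m) :=
  neBot_iff.2 fun h =>
    have hempty : ∀ᶠ _ in l, ∀ᶠ _ in m, False := mem_curry_iff.1 (h ▸ mem_bot : ∅ ∈ l.curry m)
    let ⟨_, hm⟩ := hempty.exists
    let ⟨_, hfalse⟩ := hm.exists
    hfalse

end Filter

section Fell

variable {X : Type*} [TopologicalSpace X]

theorem tendsto_fell_iff {α : Type*} {l : Filter α} {f : α → CL X} {A : CL X} :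
    Tendsto f l (@nhds _ (fell X) A) ↔
      (∀ U, IsOpen U → ((A : Set X) ∩ U).Nonempty → ∀ᶠ a in l, ((f a : Set X) ∩ U).Nonempty) ∧
      (∀ K, IsCompact K → (A : Set X) ⊆ Kᶜ → ∀ᶠ a in l, (f a : Set X) ⊆ Kᶜ) := by
  refine TopologicalSpace.tendsto_nhds_generateFrom_iff.trans ?_
  simp only [mem_union, or_imp, forall_and]
  refine and_congr ⟨fun h U hU => h _ ⟨U, hU, rfl⟩, ?_⟩ ⟨fun h K hK => h _ ⟨K, hK, rfl⟩, ?_⟩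
  · rintro h _ ⟨U, hU, rfl⟩
    exact h U hU
  · rintro h _ ⟨K, hK, rfl⟩
    exact h K hK

theorem inter_insert_range_nonempty_of_tendsto_fell {f : ℕ → CL X} {A : CL X}
    (hf : Tendsto f atTop (@nhds _ (fell X) A)) {x : ℕ → X} {y : X} (hx : ∀ m, x m ∈ (f m : Set X))
    (hxy : Tendsto x atTop (𝓝 y)) : ((A : Set X) ∩ insert y (range x)).Nonempty := by
  by_contra hA
  have hAK : (A : Set X) ⊆ (insert y (range x))ᶜ :=
    subset_compl_iff_disjoint_right.2 <|
      disjoint_iff_inter_eq_empty.2 (not_nonempty_iff_eq_empty.1 hA)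
  obtain ⟨m, hm⟩ := ((tendsto_fell_iff.1 hf).2 _ hxy.isCompact_insert_range hAK).exists
  exact hm (hx m) (mem_insert_of_mem _ (mem_range_self m))

end Fell

namespace Jspace

def tail (k : ℕ) : Set Jspace :=
  insert Option.none {q : Jspace | ∃ p : ℕ × ℕ, k ≤ p.1 ∧ q = Option.some p}

def row (n : ℕ) : Set Jspace :=
  {q : Jspace | ∃ i : ℕ, q = Option.some (n, i)}

theorem tail_anti : Antitone tail := by
  rintro a b hab q (rfl | ⟨p, hp, rfl⟩)
  · exact mem_insert _ _
  · exact Or.inr ⟨p, hab.trans hp, rfl⟩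

theorem tail_succ_subset_compl_row (n : ℕ) : tail (n + 1) ⊆ (row n)ᶜ := by
  rintro q (rfl | ⟨p, hp, rfl⟩) ⟨i, hi⟩
  · cases hi
  · cases Option.some_inj.1 hi
    omega

theorem isOpen_singleton_some (p : ℕ × ℕ) : IsOpen ({Option.some p} : Set Jspace) :=
  TopologicalSpace.isOpen_generateFrom_of_mem (Or.inl ⟨p, rfl⟩)

theorem isOpen_tail (k : ℕ) : IsOpen (tail k) :=
  TopologicalSpace.isOpen_generateFrom_of_mem (Or.inr ⟨k, rfl⟩)

theorem isOpen_iff_exists_tail_subset {U : Set Jspace} :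
    IsOpen U ↔ (Option.none ∈ U → ∃ k, tail k ⊆ U) := by
  constructor
  · intro hU
    induction hU with
    | basic s hs =>
      rcases hs with ⟨p, rfl⟩ | ⟨k, rfl⟩
      · exact fun h => nomatch mem_singleton_iff.1 h
      · exact fun _ => ⟨k, subset_rfl⟩
    | univ => exact fun _ => ⟨0, subset_univ _⟩
    | inter s t _ _ hs ht =>
      rintro ⟨h₁, h₂⟩
      obtain ⟨a, ha⟩ := hs h₁
      obtain ⟨b, hb⟩ := ht h₂
      exact ⟨max a b, subset_inter ((tail_anti (le_max_left a b)).trans ha)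
        ((tail_anti (le_max_right a b)).trans hb)⟩
    | sUnion S _ ih =>
      rintro ⟨s, hs, h⟩
      obtain ⟨k, hk⟩ := ih s hs h
      exact ⟨k, hk.trans (subset_sUnion_of_mem hs)⟩
  · intro h
    refine isOpen_iff_forall_mem_open.2 ?_
    rintro (_ | p) hx
    · obtain ⟨k, hk⟩ := h hx
      exact ⟨tail k, hk, isOpen_tail k, mem_insert _ _⟩
    · exact ⟨{Option.some p}, singleton_subset_iff.2 hx, isOpen_singleton_some p, rfl⟩

theorem isClosed_row (n : ℕ) : IsClosed (row n) :=
  isOpen_compl_iff.1 <|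
    isOpen_iff_exists_tail_subset.2 fun _ => ⟨n + 1, tail_succ_subset_compl_row n⟩

instance : T1Space Jspace := by
  refine ⟨fun x => isOpen_compl_iff.1 <| isOpen_iff_exists_tail_subset.2 fun hx => ?_⟩
  rcases x with _ | p
  · exact absurd rfl hx
  · refine ⟨p.1 + 1, (tail_succ_subset_compl_row p.1).trans (compl_subset_compl.2 ?_)⟩
    exact singleton_subset_iff.2 ⟨p.2, rfl⟩

theorem isDiscrete_row (n : ℕ) : IsDiscrete (row n) :=
  isDiscrete_iff_forall_mem_exists_isOpen.2 fun _ ⟨i, hi⟩ =>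
    ⟨{Option.some (n, i)}, isOpen_singleton_some (n, i), by
      rw [hi]; exact inter_eq_left.2 (singleton_subset_iff.2 ⟨i, rfl⟩)⟩

theorem finite_setOf_some_mem_of_isCompact {K : Set Jspace} (hK : IsCompact K) (n : ℕ) :
    {i | Option.some (n, i) ∈ K}.Finite := by
  have hrow : (K ∩ row n).Finite :=
    (hK.inter_right (isClosed_row n)).finite ((isDiscrete_row n).mono inter_subset_right)
  exact (hrow.preimage (Option.some_injective _ |>.comp (Prod.mk_right_injective n)).injOn).subset
    fun i hi => ⟨hi, i, rfl⟩

theorem tendsto_some_nhds_none {α : Type*} {l : Filter α} {n i : α → ℕ}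
    (hn : Tendsto n l atTop) :
    Tendsto (fun a => Option.some (n a, i a) : α → Jspace) l (@nhds Jspace _ Option.none) := by
  refine (tendsto_nhds (X := Jspace)).2 fun U hU hU₀ => ?_
  obtain ⟨k, hk⟩ := isOpen_iff_exists_tail_subset.1 hU hU₀
  exact (hn.eventually_ge_atTop k).mono fun a ha => hk (Or.inr ⟨_, ha, rfl⟩)

def familySet (n i : ℕ) : Set Jspace :=
  {q : Jspace | ∃ j : ℕ, j ≤ n ∧ q = Option.some (0, j)} ∪ {Option.some (n, i)}

theorem familySet_finite (n i : ℕ) : (familySet n i).Finite := by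
  refine (((finite_Iic n).image fun j => (Option.some (0, j) : Jspace)).subset ?_).union
    (finite_singleton _)
  rintro q ⟨j, hj, rfl⟩
  exact ⟨j, hj, rfl⟩

def family (n i : ℕ) : CL Jspace :=
  ⟨familySet n i, ⟨_, Or.inr rfl⟩, (familySet_finite n i).isClosed⟩

def X0 : CL Jspace :=
  ⟨row 0, ⟨_, 0, rfl⟩, isClosed_row 0⟩

theorem tendsto_family : Tendsto (fun p : ℕ × ℕ => family p.1 p.2) (atTop.curry cofinite)
    (@nhds _ (fell Jspace) X0) := by
  refine tendsto_fell_iff.2 ⟨?_, ?_⟩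
  · rintro U - ⟨_, ⟨j, rfl⟩, hj⟩
    refine eventually_curry_iff.2 <| (eventually_ge_atTop j).mono fun n hn =>
      Eventually.of_forall fun _ => ⟨_, Or.inl ⟨j, hn, rfl⟩, hj⟩
  · intro K hK hX0
    refine eventually_curry_iff.2 <| Eventually.of_forall fun n => ?_
    filter_upwards [(finite_setOf_some_mem_of_isCompact hK n).eventually_cofinite_notMem] with i hi
    rintro q (⟨j, -, rfl⟩ | rfl)
    · exact hX0 ⟨j, rfl⟩
    · exact hi

theorem X0_mem_closure_Jfamily : X0 ∈ @closure _ (fell Jspace) Jfamily :=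
  letI := fell Jspace
  mem_closure_of_tendsto tendsto_family <| eventually_curry_iff.2 <|
    (eventually_ge_atTop 1).mono fun n hn => Eventually.of_forall fun i => ⟨n, i, hn, rfl⟩

theorem not_tendsto_X0 {f : ℕ → CL Jspace} (hf : ∀ m, f m ∈ Jfamily) :
    ¬ Tendsto f atTop (@nhds _ (fell Jspace) X0) := by
  intro hconv
  choose n i hn hfni using hf
  have hnot : ∀ m j, Option.some (n m, i m) ≠ (Option.some (0, j) : Jspace) := fun m j h => by
    have h0 : n m = 0 := congrArg Prod.fst (Option.some_inj.1 h)
    have h1 := hn m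
    omega
  have hn_tendsto : Tendsto n atTop atTop := by
    refine tendsto_atTop.2 fun j => ?_
    refine ((tendsto_fell_iff.1 hconv).1 _ (isOpen_singleton_some (0, j)) ⟨_, ⟨j, rfl⟩, rfl⟩).mono
      fun m ⟨q, hq, hqj⟩ => ?_
    rw [mem_singleton_iff.1 hqj, hfni m] at hq
    rcases hq with ⟨j', hj', hjj'⟩ | hq
    · cases Option.some_inj.1 hjj'
      exact hj'
    · exact absurd hq.symm (hnot m j)
  obtain ⟨_, ⟨j, rfl⟩, hK⟩ := inter_insert_range_nonempty_of_tendsto_fell hconv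
    (fun m => by rw [hfni m]; exact Or.inr rfl) (tendsto_some_nhds_none (i := i) hn_tendsto)
  rcases hK with h | ⟨m, hm⟩
  · cases h
  · exact hnot m j hm

end Jspace

open Jspace in
/-- `(CL(J(ω)), τ_F)` is not Fréchet–Urysohn: `X₀ = {x_{0j} : j ∈ ω}` lies in the closure of
`{A_{n,i}}` but no sequence from this family converges to `X₀`. -/
theorem hyperspace_fell_J_not_frechetUrysohn :
    ∃ X0 : CL Jspace,
      (X0 : Set Jspace) = {q : Jspace | ∃ j : ℕ, q = Option.some (0, j)} ∧
      X0 ∈ @closure _ (fell Jspace) Jfamily ∧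
      ¬ ∃ f : ℕ → CL Jspace, (∀ m, f m ∈ Jfamily) ∧
          Filter.Tendsto f Filter.atTop (@nhds _ (fell Jspace) X0) :=
  ⟨X0, rfl, X0_mem_closure_Jfamily, fun ⟨_, hf, hconv⟩ => not_tendsto_X0 hf hconv⟩
end

section
/- Every strongly Fréchet–Urysohn space with a countable cs*-network at each point is first-countable. -/
open Set Filter Topology

/-- `X` is strongly Fréchet–Urysohn: for every `x` and countable family `{Aₙ}` of sets each
having `x` in its closure, one can pick `xₙ ∈ Aₙ` with `xₙ → x`. -/
def StronglyFrechetUrysohn (X : Type*) [TopologicalSpace X] : Prop :=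
  ∀ (x : X) (A : ℕ → Set X), (∀ n, x ∈ closure (A n)) →
    ∃ u : ℕ → X, (∀ n, u n ∈ A n) ∧ Filter.Tendsto u Filter.atTop (nhds x)

/-- `P` is a cs*-network at `x`: whenever a sequence `u` converges to `x` and `U` is an open
set containing `x`, some `P' ∈ P` contains `x` together with a subsequence of `u`, and
`P' ⊆ U`. -/
def IsCsStarNetworkAt {X : Type*} [TopologicalSpace X] (P : Set (Set X)) (x : X) : Prop :=
  ∀ u : ℕ → X, Filter.Tendsto u Filter.atTop (nhds x) →
    ∀ U : Set X, IsOpen U → x ∈ U →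
      ∃ P' ∈ P, ∃ φ : ℕ → ℕ, StrictMono φ ∧
        insert x (Set.range (u ∘ φ)) ⊆ P' ∧ P' ⊆ U

/-- Every strongly Fréchet–Urysohn space with a countable cs*-network at each point is
first-countable. -/
theorem stronglyFrechetUrysohn_countable_csStarNetwork_firstCountable
    {X : Type*} [TopologicalSpace X] (hsfu : StronglyFrechetUrysohn X)
    (hnet : ∀ x : X, ∃ P : Set (Set X), P.Countable ∧ IsCsStarNetworkAt P x) :
    FirstCountableTopology X := by
  classical
  refine ⟨fun x => ?_⟩
  obtain ⟨P, hPc, hPnet⟩ := hnet x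
  have hx0 : ∃ p ∈ P, x ∈ p := by
    obtain ⟨P', hP', φ, hφ, hsub, -⟩ :=
      hPnet (fun _ => x) tendsto_const_nhds univ isOpen_univ (mem_univ x)
    exact ⟨P', hP', hsub (mem_insert x _)⟩
  obtain ⟨p0, hp0P, hp0x⟩ := hx0
  have hcnt : {p ∈ P | x ∈ p}.Countable := hPc.mono (sep_subset _ _)
  obtain ⟨Q, hQ⟩ := hcnt.exists_eq_range ⟨p0, hp0P, hp0x⟩
  have hQP : ∀ n, Q n ∈ P ∧ x ∈ Q n := fun n => by
    have : Q n ∈ {p ∈ P | x ∈ p} := hQ ▸ mem_range_self n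
    exact ⟨this.1, this.2⟩
  -- Key claim: for every open `V ∋ x`, some finite union of those `Q n ⊆ V` is a nbhd of `x`.
  have key : ∀ V : Set X, IsOpen V → x ∈ V →
      ∃ k : ℕ, (⋃ n ∈ Finset.range (k+1), ⋃ (_ : Q n ⊆ V), Q n) ∈ 𝓝 x := by
    intro V hV hxV
    by_contra h
    push_neg at h
    set A : ℕ → Set X := fun k => (⋃ n ∈ Finset.range (k+1), ⋃ (_ : Q n ⊆ V), Q n)ᶜ with hA
    have hcl : ∀ k, x ∈ closure (A k) := by
      intro k
      rw [hA, closure_compl, mem_compl_iff]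
      exact fun hint => h k (mem_interior_iff_mem_nhds.mp hint)
    obtain ⟨u, hu, hut⟩ := hsfu x A hcl
    obtain ⟨P', hP'P, φ, hφ, hsub, hPU⟩ := hPnet u hut V hV hxV
    have hxP' : x ∈ P' := hsub (mem_insert _ _)
    have hP'mem : P' ∈ Set.range Q := hQ ▸ ⟨hP'P, hxP'⟩
    obtain ⟨m, hm⟩ := hP'mem
    have h1 : u (φ m) ∈ P' := hsub (mem_insert_of_mem _ ⟨m, rfl⟩)
    have h2 : u (φ m) ∈ A (φ m) := hu _
    apply h2
    refine mem_iUnion.mpr ⟨m, ?_⟩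
    refine mem_iUnion.mpr ⟨Finset.mem_range.mpr (Nat.lt_succ_of_le hφ.le_apply), ?_⟩
    exact mem_iUnion.mpr ⟨hm ▸ hPU, hm ▸ h1⟩
  have hbasis : (𝓝 x).HasBasis (fun F : Finset ℕ => (⋃ n ∈ F, Q n) ∈ 𝓝 x)
      (fun F => ⋃ n ∈ F, Q n) := by
    constructor
    intro U
    constructor
    · intro hU
      obtain ⟨k, hk⟩ := key (interior U) isOpen_interior (mem_interior_iff_mem_nhds.mpr hU)
      refine ⟨(Finset.range (k+1)).filter (fun n => Q n ⊆ interior U), ?_, ?_⟩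
      · have heq : (⋃ n ∈ (Finset.range (k+1)).filter (fun n => Q n ⊆ interior U), Q n)
            = ⋃ n ∈ Finset.range (k+1), ⋃ (_ : Q n ⊆ interior U), Q n := by
          ext y
          simp only [mem_iUnion, Finset.mem_filter, Finset.mem_range]
          tauto
        rw [heq]; exact hk
      · refine iUnion₂_subset fun n hn => ?_
        exact ((Finset.mem_filter.mp hn).2).trans interior_subset
    · rintro ⟨F, hF, hFU⟩
      exact mem_of_superset hF hFU
  exact hbasis.isCountablyGenerated
end

section
/- Let Y be the topological sum of ω₁ many convergent sequences with their limits, and let S_{ω₁} be the quotient obtained by identifying all limit points to a single point ∞. Then S_{ω₁} does not have an ω^ω-base at ∞: there is no neighborhood base {U_α : α ∈ ω^ω} at ∞ with U_β ⊆ U_α whenever α ≤ β in the pointwise order. -/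
/-!
Suppose `U` were an `ω^ω`-base at `∞`. Well-order `ι` in type `ω₁` and, for every `b`, number the
countably many predecessors of `b` injectively by `g · b`. For each `a`, the basic neighborhood
`V_a` that keeps the tail of the `b`-th sequence from `g a b` on contains some `U (α a)`. Among
the uncountably many `α a` there is an infinite countable family `A` bounded by one `β`, so
`U β ⊆ V_a` for all `a ∈ A`. Choose `b` above `A`: the numbers `g a b`, `a ∈ A`, are unbounded,
so the `b`-th sequence has no tail inside `U β`, although `U β` is a neighborhood of `∞`.
-/

open Set Filter Topology

/-- The fan `S_κ` over an index type `ι`: `none` is the point `∞`, and `some (a, n)` is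
the `n`-th point of the `a`-th convergent sequence. All points other than `∞` are
isolated, and the basic neighborhoods of `∞` are the sets containing `∞` together with a
tail of every sequence. -/
def fanTop (ι : Type*) : TopologicalSpace (Option (ι × ℕ)) :=
  TopologicalSpace.generateFrom
    ({S | ∃ p : ι × ℕ, S = {Option.some p}} ∪
     {S | ∃ f : ι → ℕ, S = insert Option.none
        {q : Option (ι × ℕ) | ∃ (a : ι) (n : ℕ), f a ≤ n ∧ q = Option.some (a, n)}})

section Condensation

variable {ι X : Type*}

theorem exists_forall_nhds_preimage_not_countable [TopologicalSpace X] [LindelofSpace X]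
    [Uncountable ι] (f : ι → X) : ∃ p, ∀ V ∈ 𝓝 p, ¬ (f ⁻¹' V).Countable := by
  by_contra! h
  choose V hV_nhds hV_countable using h
  obtain ⟨t, ht, -, hcover⟩ :=
    isLindelof_univ.elim_nhds_subcover V fun p _ => hV_nhds p
  refine not_countable_univ (α := ι) ((ht.biUnion fun p _ => hV_countable p).mono fun i _ => ?_)
  simpa using hcover (mem_univ (f i))

theorem exists_countable_infinite_bddAbove_image [Uncountable ι] (α : ι → ℕ → ℕ) :
    ∃ A : Set ι, A.Countable ∧ A.Infinite ∧ BddAbove (α '' A) := by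
  obtain ⟨p, hp⟩ := exists_forall_nhds_preimage_not_countable α
  have hcyl : ∀ k, (α ⁻¹' (Iio k).pi fun j => {p j}).Infinite := fun k hfin =>
    hp _ (set_pi_mem_nhds (finite_Iio k) fun j _ => by simp) hfin.countable
  -- `D k` holds `k` points whose values agree with `p` below `k`, so at coordinate `n` only the
  -- finitely many points of `D 0, …, D n` can differ from `p n`.
  choose D hD_sub hD_card using fun k => (hcyl k).exists_subset_card_eq k
  refine ⟨⋃ k, D k, countable_iUnion fun k => (D k).countable_toSet, fun hfin => ?_, ?_⟩
  · have := Finset.card_le_card (s := D (hfin.toFinset.card + 1)) fun x hx =>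
      hfin.mem_toFinset.2 (mem_iUnion_of_mem _ hx)
    rw [hD_card] at this
    omega
  · refine bddAbove_pi.2 fun n => ((finite_iUnion fun k : Iic n => (D k).finite_toSet).image
      (α · n) |>.insert (p n)).bddAbove.mono ?_
    rintro _ ⟨_, ⟨x, hx, rfl⟩, rfl⟩
    obtain ⟨k, hk⟩ := mem_iUnion.1 hx
    rcases le_or_gt k n with hkn | hnk
    · exact mem_insert_of_mem _ ⟨x, mem_iUnion.2 ⟨⟨k, hkn⟩, hk⟩, rfl⟩
    · exact mem_insert_iff.2 (Or.inl (hD_sub k hk n hnk))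

end Condensation

section Scale

variable {ι : Type*} [LinearOrder ι] [Uncountable ι]

theorem exists_subset_Iio_of_countable (hIio : ∀ b : ι, (Iio b).Countable) {A : Set ι}
    (hA : A.Countable) : ∃ b, A ⊆ Iio b := by
  by_contra! h
  refine not_countable_univ (α := ι) ((hA.biUnion fun a _ => (hIio a).insert a).mono fun b _ => ?_)
  obtain ⟨a, ha, hba⟩ := not_subset.1 (h b)
  simpa [Iio_insert] using ⟨a, ha, not_lt.1 hba⟩

theorem exists_scale_of_countable_Iio (hIio : ∀ b : ι, (Iio b).Countable) :
    ∃ g : ι → ι → ℕ, ∀ A : Set ι, A.Countable → A.Infinite → ∃ b, ∀ N, ∃ a ∈ A, N < g a b := by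
  choose e he using fun b => countable_iff_exists_injOn.1 (hIio b)
  refine ⟨fun a b => e b a, fun A hA hA_inf => ?_⟩
  obtain ⟨b, hAb⟩ := exists_subset_Iio_of_countable hIio hA
  refine ⟨b, fun N => ?_⟩
  obtain ⟨_, ⟨a, ha, rfl⟩, hN⟩ := (hA_inf.image ((he b).mono hAb)).exists_gt N
  exact ⟨a, ha, hN⟩

end Scale

theorem exists_scale_of_mk_le_aleph_one {ι : Type*} [Uncountable ι]
    (hι : Cardinal.mk ι ≤ Cardinal.aleph 1) :
    ∃ g : ι → ι → ℕ, ∀ A : Set ι, A.Countable → A.Infinite → ∃ b, ∀ N, ∃ a ∈ A, N < g a b := by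
  obtain ⟨_, _, hord⟩ := Cardinal.exists_ord_eq_type_lt ι
  refine exists_scale_of_countable_Iio fun b => Cardinal.le_aleph0_iff_set_countable.1 ?_
  exact Cardinal.lt_aleph_one_iff.1 ((Cardinal.mk_Iio_lt b hord).trans_le hι)

section Fan

variable {ι : Type*}

def fanNhd (f : ι → ℕ) : Set (Option (ι × ℕ)) :=
  insert none {q | ∃ (a : ι) (n : ℕ), f a ≤ n ∧ q = some (a, n)}

@[simp]
theorem some_mem_fanNhd {f : ι → ℕ} {a : ι} {n : ℕ} : some (a, n) ∈ fanNhd f ↔ f a ≤ n := by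
  simp [fanNhd]

theorem fanNhd_anti : Antitone (fanNhd (ι := ι)) := by
  rintro f g hfg _ (rfl | ⟨a, n, hn, rfl⟩)
  · exact mem_insert _ _
  · exact some_mem_fanNhd.2 ((hfg a).trans hn)

theorem fanTop_nhds_none_hasBasis :
    (@nhds _ (fanTop ι) none).HasBasis (fun _ => True) (fanNhd (ι := ι)) := by
  have hgen : {s | none ∈ s ∧ s ∈ ({S | ∃ p : ι × ℕ, S = {some p}} ∪ {S | ∃ f, S = fanNhd f})}
      = range fanNhd := by
    ext s
    constructor
    · rintro ⟨hs, ⟨p, rfl⟩ | ⟨f, rfl⟩⟩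
      · simp at hs
      · exact ⟨f, rfl⟩
    · rintro ⟨f, rfl⟩
      exact ⟨mem_insert _ _, Or.inr ⟨f, rfl⟩⟩
  rw [fanTop, TopologicalSpace.nhds_generateFrom]
  erw [hgen, iInf_range]
  exact hasBasis_iInf_principal fanNhd_anti.directed_ge

end Fan

/-- `S_{ω₁}` has no `ω^ω`-base at the point `∞`. -/
theorem fan_omega1_no_omegaOmegaBase_at_infty {ι : Type*}
    (hι : Cardinal.mk ι = Cardinal.aleph 1) :
    ¬ HasOmegaOmegaBaseAt (fanTop ι) (Option.none : Option (ι × ℕ)) := by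
  rintro ⟨U, hU_nhds, hU_anti, hU_base⟩
  have : Uncountable ι := Cardinal.aleph0_lt_mk_iff.1 (by simp [hι])
  obtain ⟨g, hg⟩ := exists_scale_of_mk_le_aleph_one hι.le
  choose α hα using fun a => hU_base _ (fanTop_nhds_none_hasBasis.mem_of_mem (i := g a) trivial)
  obtain ⟨A, hA_countable, hA_infinite, β, hβ⟩ := exists_countable_infinite_bddAbove_image α
  obtain ⟨f, -, hf⟩ := fanTop_nhds_none_hasBasis.mem_iff.1 (hU_nhds β)
  obtain ⟨b, hb⟩ := hg A hA_countable hA_infinite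
  obtain ⟨a, ha, hfg⟩ := hb (f b)
  have : some (b, f b) ∈ fanNhd (g a) :=
    hα a (hU_anti _ _ (hβ ⟨a, ha, rfl⟩) (hf (some_mem_fanNhd.2 le_rfl)))
  exact (some_mem_fanNhd.1 this).not_gt hfg
end
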